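/- Let B = ⟨α, β, γ | α² central, β² central, α²β² = γ²⟩. Then the commutator subgroup Γ₂(B) intersects the subgroup Z generated by α² and β² trivially. -/

import Mathlib

namespace Stmt12

open scoped commutatorElement

/-- Relators for `B = ⟨α, β, γ | α² central, β² central, α²β² = γ²⟩`,
with `α = of 0`, `β = of 1`, `γ = of 2`. -/
def Brels : Set (FreeGroup (Fin 3)) :=
  {⁅(FreeGroup.of (0 : Fin 3)) ^ 2, FreeGroup.of (1 : Fin 3)⁆,
   ⁅(FreeGroup.of (0 : Fin 3)) ^ 2, FreeGroup.of (2 : Fin 3)⁆,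
   ⁅(FreeGroup.of (1 : Fin 3)) ^ 2, FreeGroup.of (0 : Fin 3)⁆,
   ⁅(FreeGroup.of (1 : Fin 3)) ^ 2, FreeGroup.of (2 : Fin 3)⁆,
   (FreeGroup.of (0 : Fin 3)) ^ 2 * (FreeGroup.of (1 : Fin 3)) ^ 2 *
     ((FreeGroup.of (2 : Fin 3)) ^ 2)⁻¹}

/-- The group `B` (a presentation of `B₂(T²)`). -/
abbrev B := PresentedGroup Brels

/-- `ℤ₂ ∗ ℤ₂ ∗ ℤ₂`, presented on three generators each of order 2. -/
abbrev W3 := PresentedGroup {r : FreeGroup (Fin 3) | ∃ i : Fin 3, r = (FreeGroup.of i) ^ 2}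

def α : B := PresentedGroup.of (0 : Fin 3)
def β : B := PresentedGroup.of (1 : Fin 3)
def γ : B := PresentedGroup.of (2 : Fin 3)

/-- the length-type map killing the generator `j`. -/
def fj (j : Fin 3) : Fin 3 → Multiplicative ℤ :=
  fun i => if i = j then (if j = 2 then Multiplicative.ofAdd 2 else 1) else Multiplicative.ofAdd 1

lemma fj_rels (j : Fin 3) : ∀ r ∈ Brels, FreeGroup.lift (fj j) r = 1 := by
  intro r hr
  rcases hr with h | h | h | h | h <;> subst h
  · rw [map_commutatorElement]; exact commutatorElement_eq_one_iff_commute.mpr (Commute.all _ _)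
  · rw [map_commutatorElement]; exact commutatorElement_eq_one_iff_commute.mpr (Commute.all _ _)
  · rw [map_commutatorElement]; exact commutatorElement_eq_one_iff_commute.mpr (Commute.all _ _)
  · rw [map_commutatorElement]; exact commutatorElement_eq_one_iff_commute.mpr (Commute.all _ _)
  · simp only [map_mul, map_pow, map_inv, FreeGroup.lift_apply_of, fj]
    fin_cases j <;> decide

/-- the induced homomorphism `B → ℤ`. -/
def ℓ (j : Fin 3) : B →* Multiplicative ℤ := PresentedGroup.toGroup (fj_rels j)

lemma rel_mem (r : FreeGroup (Fin 3)) (hr : r ∈ Brels) :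
    (QuotientGroup.mk r : B) = 1 :=
  (QuotientGroup.eq_one_iff r).mpr (Subgroup.subset_normalClosure hr)

lemma comm_ab : Commute (α ^ 2) (β ^ 2) := by
  have h : ⁅α ^ 2, β⁆ = 1 := by
    have := rel_mem _ (show ⁅(FreeGroup.of (0 : Fin 3)) ^ 2, FreeGroup.of (1 : Fin 3)⁆ ∈ Brels by
      left; rfl)
    simp [α, β, PresentedGroup.of, commutatorElement_def] at this ⊢; exact this
  exact ((commutatorElement_eq_one_iff_commute.mp h).pow_right 2)

lemma mem_closure_form {x : B} (hx : x ∈ Subgroup.closure ({α ^ 2, β ^ 2} : Set B)) :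
    ∃ m n : ℤ, x = (α ^ 2) ^ m * (β ^ 2) ^ n := by
  induction hx using Subgroup.closure_induction with
  | mem y hy =>
    simp only [Set.mem_insert_iff, Set.mem_singleton_iff] at hy
    rcases hy with h | h
    · exact ⟨1, 0, by simp [h]⟩
    · exact ⟨0, 1, by simp [h]⟩
  | one => exact ⟨0, 0, by simp⟩
  | mul y z _ _ hy hz =>
    obtain ⟨m, n, rfl⟩ := hy
    obtain ⟨m', n', rfl⟩ := hz
    refine ⟨m + m', n + n', ?_⟩
    have hc : Commute ((β ^ 2) ^ n) ((α ^ 2) ^ m') := (comm_ab.symm.zpow_zpow _ _)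
    rw [zpow_add, zpow_add]
    calc (α ^ 2) ^ m * (β ^ 2) ^ n * ((α ^ 2) ^ m' * (β ^ 2) ^ n')
        = (α ^ 2) ^ m * ((β ^ 2) ^ n * (α ^ 2) ^ m') * (β ^ 2) ^ n' := by group
      _ = (α ^ 2) ^ m * ((α ^ 2) ^ m' * (β ^ 2) ^ n) * (β ^ 2) ^ n' := by rw [hc]
      _ = (α ^ 2) ^ m * (α ^ 2) ^ m' * ((β ^ 2) ^ n * (β ^ 2) ^ n') := by group
  | inv y _ hy =>
    obtain ⟨m, n, rfl⟩ := hy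
    refine ⟨-m, -n, ?_⟩
    rw [mul_inv_rev, zpow_neg, zpow_neg]
    exact ((comm_ab.zpow_zpow m n).inv_inv).eq.symm

lemma ℓ_of (j i : Fin 3) : ℓ j (PresentedGroup.of i) = fj j i := PresentedGroup.toGroup.of _

/-- The commutator subgroup `Γ₂(B)` meets the subgroup `Z = ⟨α², β²⟩`
trivially. -/
theorem stmt_12 :
    commutator B ⊓ Subgroup.closure ({α ^ 2, β ^ 2} : Set B) = ⊥ := by
  rw [eq_bot_iff]
  rintro x ⟨hxc, hxz⟩
  obtain ⟨m, n, rfl⟩ := mem_closure_form hxz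
  have hk : ∀ j, ℓ j ((α ^ 2) ^ m * (β ^ 2) ^ n) = 1 := fun j =>
    Abelianization.commutator_subset_ker (ℓ j) hxc
  have h0 : ((ℓ 0 α) ^ 2) ^ m * ((ℓ 0 β) ^ 2) ^ n = 1 := by
    simpa [map_mul, map_zpow, map_pow] using hk 0
  have h1 : ((ℓ 1 α) ^ 2) ^ m * ((ℓ 1 β) ^ 2) ^ n = 1 := by
    simpa [map_mul, map_zpow, map_pow] using hk 1
  rw [show ℓ 0 α = fj 0 0 from ℓ_of 0 0, show ℓ 0 β = fj 0 1 from ℓ_of 0 1] at h0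
  rw [show ℓ 1 α = fj 1 0 from ℓ_of 1 0, show ℓ 1 β = fj 1 1 from ℓ_of 1 1] at h1
  simp only [fj, if_pos, if_neg, Fin.isValue] at h0 h1
  norm_num at h0 h1
  rw [if_neg (by decide)] at h0
  rw [if_neg (by decide)] at h1
  have hn0 := congrArg Multiplicative.toAdd h0
  have hm0 := congrArg Multiplicative.toAdd h1
  simp only [toAdd_mul, Int.toAdd_zpow, Int.toAdd_pow, toAdd_ofAdd, toAdd_one, one_pow] at hn0 hm0
  have hn : n = 0 := by omega
  have hm : m = 0 := by omega
  simp [hn, hm]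

end Stmt12
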